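/- arXiv:1701.05911 — 3 statements merged into one kernel-verified Lean document; each statement's English description precedes it below -/
import Mathlib

section
/- (High-dimensional delta theorem, part b, ℓ₂/Frobenius version.) Let (Ω, F, P) be a probability space, let pₙ be a sequence of positive integers, m a fixed positive integer, β₀ₙ ∈ ℝ^{pₙ}, and let β̂ₙ : Ω → ℝ^{pₙ} be random vectors. Let fₙ : ℝ^{pₙ} → ℝᵐ be a family of functions that is uniformly differentiable along (β₀ₙ) with derivative matrices Dₙ (m × pₙ). Let rₙ → ∞ be positive reals and suppose the sequence rₙ‖β̂ₙ − β₀ₙ‖₂ is Oₚ(1). If ‖Dₙ‖_F → 0 as n → ∞, then rₙ‖fₙ(β̂ₙ) − fₙ(β₀ₙ)‖₂ is oₚ(1), i.e., rₙ‖fₙ(β̂ₙ) − fₙ(β₀ₙ)‖₂ → 0 in probability. -/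
open MeasureTheory Filter Finset

/-- Euclidean (ℓ₂) norm of a vector in ℝᵏ. -/
noncomputable def l2norm {k : ℕ} (v : Fin k → ℝ) : ℝ :=
  Real.sqrt (∑ i, v i ^ 2)

/-- Frobenius norm of an m × p real matrix. -/
noncomputable def frobNorm {m p : ℕ} (A : Matrix (Fin m) (Fin p) ℝ) : ℝ :=
  Real.sqrt (∑ i, ∑ j, A i j ^ 2)

/-!
On the event `rₙ‖β̂ₙ − β₀ₙ‖₂ ≤ M` the increment `hₙ = β̂ₙ − β₀ₙ` has norm at most `M / rₙ → 0`,
so uniform differentiability and the Frobenius bound `‖Dₙh‖₂ ≤ ‖Dₙ‖_F ‖h‖₂` give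
`‖fₙ(β₀ₙ + hₙ) − fₙ(β₀ₙ)‖₂ ≤ (ε + ‖Dₙ‖_F) ‖hₙ‖₂` with `ε` arbitrary and `‖Dₙ‖_F → 0`.
Hence `rₙ‖fₙ(β̂ₙ) − fₙ(β₀ₙ)‖₂ ≤ δ` there for large `n`, and tightness makes the
complementary event as unlikely as we wish.
-/

lemma l2norm_nonneg {k : ℕ} (v : Fin k → ℝ) : 0 ≤ l2norm v := Real.sqrt_nonneg _

lemma l2norm_eq_zero_iff {k : ℕ} (v : Fin k → ℝ) : l2norm v = 0 ↔ v = 0 := by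
  rw [l2norm, Real.sqrt_eq_zero (by positivity),
    Finset.sum_eq_zero_iff_of_nonneg (fun i _ => sq_nonneg _)]
  simp [funext_iff]

lemma l2norm_eq_norm_toLp {k : ℕ} (v : Fin k → ℝ) :
    l2norm v = ‖(WithLp.toLp 2 v : EuclideanSpace ℝ (Fin k))‖ := by
  simp [l2norm, EuclideanSpace.norm_eq]

lemma l2norm_add_le {k : ℕ} (x y : Fin k → ℝ) :
    l2norm (fun i => x i + y i) ≤ l2norm x + l2norm y := by
  simp only [l2norm_eq_norm_toLp]
  exact norm_add_le (WithLp.toLp 2 x : EuclideanSpace ℝ (Fin k)) (WithLp.toLp 2 y)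

lemma l2norm_mulVec_le {m p : ℕ} (A : Matrix (Fin m) (Fin p) ℝ) (h : Fin p → ℝ) :
    l2norm (A.mulVec h) ≤ frobNorm A * l2norm h := by
  rw [l2norm, frobNorm, l2norm, ← Real.sqrt_mul (by positivity), Finset.sum_mul]
  exact Real.sqrt_le_sqrt <| Finset.sum_le_sum fun i _ =>
    Finset.sum_mul_sq_le_sq_mul_sq univ (A i) h

lemma l2norm_sub_le_of_remainder_le {m p : ℕ} {f : (Fin p → ℝ) → Fin m → ℝ}
    {β₀ h : Fin p → ℝ} {D : Matrix (Fin m) (Fin p) ℝ} {ε : ℝ}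
    (hrem : 0 < l2norm h →
      l2norm (fun i => f (fun j => β₀ j + h j) i - f β₀ i - D.mulVec h i) ≤ ε * l2norm h) :
    l2norm (fun i => f (fun j => β₀ j + h j) i - f β₀ i) ≤ (ε + frobNorm D) * l2norm h := by
  rcases (l2norm_nonneg h).eq_or_lt with h_zero | h_pos
  · obtain rfl := (l2norm_eq_zero_iff h).1 h_zero.symm
    simp [l2norm]
  calc l2norm (fun i => f (fun j => β₀ j + h j) i - f β₀ i)
      ≤ l2norm (fun i => f (fun j => β₀ j + h j) i - f β₀ i - D.mulVec h i)
        + l2norm (D.mulVec h) := by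
        simpa using l2norm_add_le
          (fun i => f (fun j => β₀ j + h j) i - f β₀ i - D.mulVec h i) (D.mulVec h)
    _ ≤ ε * l2norm h + frobNorm D * l2norm h := add_le_add (hrem h_pos) (l2norm_mulVec_le D h)
    _ = (ε + frobNorm D) * l2norm h := by ring

lemma eventually_l2norm_sub_le_of_uniformDiff {m : ℕ} {p : ℕ → ℕ}
    {β₀ : ∀ n, Fin (p n) → ℝ} {f : ∀ n, (Fin (p n) → ℝ) → (Fin m → ℝ)}
    {D : ∀ n, Matrix (Fin m) (Fin (p n)) ℝ}
    (hdiff : ∀ ε > (0 : ℝ), ∃ δ > (0 : ℝ), ∀ n, ∀ h : Fin (p n) → ℝ,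
      0 < l2norm h → l2norm h ≤ δ →
      l2norm (fun i => f n (fun j => β₀ n j + h j) i - f n (β₀ n) i
        - (D n).mulVec h i) ≤ ε * l2norm h)
    (hD : Tendsto (fun n => frobNorm (D n)) atTop (nhds 0)) {η : ℝ} (hη : 0 < η) :
    ∃ δ > (0 : ℝ), ∀ᶠ n in atTop, ∀ h : Fin (p n) → ℝ, l2norm h ≤ δ →
      l2norm (fun i => f n (fun j => β₀ n j + h j) i - f n (β₀ n) i) ≤ η * l2norm h := by
  obtain ⟨δ, hδ, hrem⟩ := hdiff (η / 2) (half_pos hη)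
  refine ⟨δ, hδ, ?_⟩
  filter_upwards [hD.eventually_le_const (half_pos hη)] with n hDn h hh
  calc _ ≤ (η / 2 + frobNorm (D n)) * l2norm h :=
        l2norm_sub_le_of_remainder_le fun h_pos => hrem n h h_pos hh
    _ ≤ (η / 2 + η / 2) * l2norm h := by gcongr; exact l2norm_nonneg h
    _ = η * l2norm h := by ring

lemma tendsto_measure_lt_of_tight {Ω : Type*} [MeasurableSpace Ω] {P : Measure Ω}
    {X Y : ℕ → Ω → ℝ}
    (hY : ∀ ε > (0 : ℝ), ∃ M > (0 : ℝ), ∀ n, P {ω | M < Y n ω} ≤ ENNReal.ofReal ε)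
    (hXY : ∀ M > (0 : ℝ), ∀ δ > (0 : ℝ), ∀ᶠ n in atTop, ∀ ω, Y n ω ≤ M → X n ω ≤ δ)
    {δ : ℝ} (hδ : 0 < δ) :
    Tendsto (fun n => P {ω | δ < X n ω}) atTop (nhds 0) := by
  refine ENNReal.tendsto_atTop_zero.2 fun ε hε => ?_
  obtain ⟨ε', -, hε'_pos, hε'_le⟩ := ENNReal.lt_iff_exists_real_btwn.1 hε
  obtain ⟨M, hM, hYM⟩ := hY ε' (ENNReal.ofReal_pos.1 hε'_pos)
  obtain ⟨N, hN⟩ := (hXY M hM δ hδ).exists_forall_of_atTop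
  refine ⟨N, fun n hn => le_trans ?_ hε'_le.le⟩
  refine (measure_mono fun ω hω => ?_).trans (hYM n)
  by_contra hYω
  exact (not_lt.2 (hN n hn ω (not_lt.1 hYω))) hω

theorem delta_method_high_dim_b_general
    {Ω : Type*} [MeasurableSpace Ω] (P : Measure Ω)
    (p : ℕ → ℕ) (m : ℕ)
    (β₀ : ∀ n, Fin (p n) → ℝ) (βhat : ∀ n, Ω → Fin (p n) → ℝ)
    (f : ∀ n, (Fin (p n) → ℝ) → (Fin m → ℝ))
    (D : ∀ n, Matrix (Fin m) (Fin (p n)) ℝ)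
    (hdiff : ∀ ε > (0 : ℝ), ∃ δ > (0 : ℝ), ∀ n, ∀ h : Fin (p n) → ℝ,
      0 < l2norm h → l2norm h ≤ δ →
      l2norm (fun i => f n (fun j => β₀ n j + h j) i - f n (β₀ n) i
        - (D n).mulVec h i) ≤ ε * l2norm h)
    (r : ℕ → ℝ) (hrtop : Tendsto r atTop atTop)
    (hOp : ∀ ε > (0 : ℝ), ∃ M > (0 : ℝ), ∀ n,
      P {ω | M < r n * l2norm (fun j => βhat n ω j - β₀ n j)} ≤ ENNReal.ofReal ε)
    (hD : Tendsto (fun n => frobNorm (D n)) atTop (nhds 0)) :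
    -- rₙ‖fₙ(β̂ₙ) − fₙ(β₀ₙ)‖₂ → 0 in probability
    ∀ δ > (0 : ℝ),
      Tendsto (fun n =>
        P {ω | δ < r n * l2norm (fun i => f n (βhat n ω) i - f n (β₀ n) i)})
        atTop (nhds 0) := by
  refine fun δ hδ => tendsto_measure_lt_of_tight hOp (fun M hM c hc => ?_) hδ
  obtain ⟨δ', hδ', hinc⟩ := eventually_l2norm_sub_le_of_uniformDiff hdiff hD (div_pos hc hM)
  filter_upwards [hinc, hrtop.eventually_gt_atTop 0, hrtop.eventually_ge_atTop (M / δ')]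
    with n hinc_n hr_pos hr_ge ω hω
  set h : Fin (p n) → ℝ := fun j => βhat n ω j - β₀ n j
  have hβ : βhat n ω = fun j => β₀ n j + h j := by funext j; simp [h]
  have hh : l2norm h ≤ δ' :=
    le_of_mul_le_mul_left (hω.trans ((div_le_iff₀ hδ').1 hr_ge)) hr_pos
  calc r n * l2norm (fun i => f n (βhat n ω) i - f n (β₀ n) i)
      ≤ r n * (c / M * l2norm h) := by rw [hβ]; gcongr; exact hinc_n h hh
    _ = c / M * (r n * l2norm h) := by ring
    _ ≤ c / M * M := by gcongr
    _ = c := div_mul_cancel₀ c hM.ne'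

/-- High-dimensional delta theorem, part b (ℓ₂/Frobenius version):
if rₙ‖β̂ₙ − β₀ₙ‖₂ = Oₚ(1), fₙ is uniformly differentiable along β₀ₙ with
derivatives Dₙ, and ‖Dₙ‖_F → 0, then rₙ‖fₙ(β̂ₙ) − fₙ(β₀ₙ)‖₂ = oₚ(1). -/
theorem delta_method_high_dim_b
    {Ω : Type*} [MeasurableSpace Ω] (P : Measure Ω) [IsProbabilityMeasure P]
    (p : ℕ → ℕ) (hp : ∀ n, 0 < p n) (m : ℕ) (hm : 0 < m)
    (β₀ : ∀ n, Fin (p n) → ℝ) (βhat : ∀ n, Ω → Fin (p n) → ℝ)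
    (f : ∀ n, (Fin (p n) → ℝ) → (Fin m → ℝ))
    (D : ∀ n, Matrix (Fin m) (Fin (p n)) ℝ)
    (hdiff : ∀ ε > (0 : ℝ), ∃ δ > (0 : ℝ), ∀ n, ∀ h : Fin (p n) → ℝ,
      0 < l2norm h → l2norm h ≤ δ →
      l2norm (fun i => f n (fun j => β₀ n j + h j) i - f n (β₀ n) i
        - (D n).mulVec h i) ≤ ε * l2norm h)
    (r : ℕ → ℝ) (hr : ∀ n, 0 < r n) (hrtop : Tendsto r atTop atTop)
    (hOp : ∀ ε > (0 : ℝ), ∃ M > (0 : ℝ), ∀ n,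
      P {ω | M < r n * l2norm (fun j => βhat n ω j - β₀ n j)} ≤ ENNReal.ofReal ε)
    (hD : Tendsto (fun n => frobNorm (D n)) atTop (nhds 0)) :
    -- rₙ‖fₙ(β̂ₙ) − fₙ(β₀ₙ)‖₂ → 0 in probability
    ∀ δ > (0 : ℝ),
      Tendsto (fun n =>
        P {ω | δ < r n * l2norm (fun i => f n (βhat n ω) i - f n (β₀ n) i)})
        atTop (nhds 0) :=
  delta_method_high_dim_b_general P p m β₀ βhat f D hdiff r hrtop hOp hD
end

section
/- (Delta theorem part b, ℓ₁ version.) Let (Ω, F, P) be a probability space, pₙ a sequence of positive integers, m a fixed positive integer, β₀ₙ ∈ ℝ^{pₙ}, and β̂ₙ : Ω → ℝ^{pₙ} random vectors. Let fₙ : ℝ^{pₙ} → ℝᵐ be uniformly differentiable in ℓ₁ norm along (β₀ₙ) with derivative matrices Dₙ. Let rₙ → ∞ be positive reals with rₙ‖β̂ₙ − β₀ₙ‖₁ = Oₚ(1). If the maximum column sum norm ‖Dₙ‖₁ → 0 as n → ∞, then rₙ‖fₙ(β̂ₙ) − fₙ(β₀ₙ)‖₁ → 0 in probability. -/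
open MeasureTheory Filter Finset

/-- ℓ₁ norm of a vector in ℝᵏ. -/
def l1norm {k : ℕ} (v : Fin k → ℝ) : ℝ := ∑ i, |v i|

/-- Maximum column sum matrix norm of an m × p real matrix. -/
noncomputable def maxColSumNorm {m p : ℕ} (A : Matrix (Fin m) (Fin p) ℝ) : ℝ :=
  ⨆ j, ∑ i, |A i j|

/-! On the event `rₙ‖β̂ₙ − β₀ₙ‖₁ ≤ M`, whose complement has probability at most `ε` for every
`n`, the increment `hₙ = β̂ₙ − β₀ₙ` has norm at most `M / rₙ → 0`, so it eventually lies inside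
the radius of uniform differentiability for a tolerance `c`. There
`‖fₙ(β̂ₙ) − fₙ(β₀ₙ)‖₁ ≤ ‖remainder‖₁ + ‖Dₙ‖₁‖hₙ‖₁ ≤ (c + ‖Dₙ‖₁)‖hₙ‖₁`, and since `‖Dₙ‖₁ → 0`
this is eventually at most `2c‖hₙ‖₁`, giving `rₙ‖fₙ(β̂ₙ) − fₙ(β₀ₙ)‖₁ ≤ 2cM`. -/

section L1Norm

variable {k : ℕ}

lemma l1norm_nonneg (v : Fin k → ℝ) : 0 ≤ l1norm v :=
  sum_nonneg fun i _ => abs_nonneg (v i)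

lemma l1norm_eq_zero_iff {v : Fin k → ℝ} : l1norm v = 0 ↔ v = 0 := by
  simp only [l1norm, sum_eq_zero_iff_of_nonneg fun i _ => abs_nonneg (v i), mem_univ,
    true_implies, abs_eq_zero, funext_iff, Pi.zero_apply]

lemma l1norm_add_le (u v : Fin k → ℝ) : l1norm (u + v) ≤ l1norm u + l1norm v := by
  rw [l1norm, l1norm, l1norm, ← sum_add_distrib]
  exact sum_le_sum fun i _ => abs_add_le (u i) (v i)

lemma l1norm_mulVec_le {m p : ℕ} (A : Matrix (Fin m) (Fin p) ℝ) (h : Fin p → ℝ) :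
    l1norm (A.mulVec h) ≤ maxColSumNorm A * l1norm h :=
  calc l1norm (A.mulVec h) = ∑ i, |∑ j, A i j * h j| := rfl
    _ ≤ ∑ i, ∑ j, |A i j| * |h j| :=
        sum_le_sum fun i _ => (abs_sum_le_sum_abs _ _).trans_eq (by simp only [abs_mul])
    _ = ∑ j, (∑ i, |A i j|) * |h j| := by rw [sum_comm]; simp only [sum_mul]
    _ ≤ ∑ j, maxColSumNorm A * |h j| :=
        sum_le_sum fun j _ => mul_le_mul_of_nonneg_right
          (le_ciSup (f := fun j => ∑ i, |A i j|) (Set.finite_range _).bddAbove j) (abs_nonneg _)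
    _ = maxColSumNorm A * l1norm h := (mul_sum _ _ _).symm

end L1Norm

lemma l1norm_sub_le_of_remainder_le {p m : ℕ} {f : (Fin p → ℝ) → Fin m → ℝ}
    {x₀ : Fin p → ℝ} {D : Matrix (Fin m) (Fin p) ℝ} {ε δ : ℝ}
    (hrem : ∀ h : Fin p → ℝ, 0 < l1norm h → l1norm h ≤ δ →
      l1norm (fun i => f (fun j => x₀ j + h j) i - f x₀ i - D.mulVec h i) ≤ ε * l1norm h)
    {x : Fin p → ℝ} (hx : l1norm (fun j => x j - x₀ j) ≤ δ) :
    l1norm (fun i => f x i - f x₀ i) ≤ (ε + maxColSumNorm D) * l1norm (fun j => x j - x₀ j) := by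
  set h : Fin p → ℝ := fun j => x j - x₀ j
  have hx₀h : (fun j => x₀ j + h j) = x := funext fun j => add_sub_cancel (x₀ j) (x j)
  rcases (l1norm_nonneg h).eq_or_lt with hzero | hpos
  · obtain rfl : x = x₀ :=
      funext fun j => sub_eq_zero.mp (congrFun (l1norm_eq_zero_iff.mp hzero.symm) j)
    rw [← hzero, mul_zero]
    simp [l1norm]
  have hsplit : (fun i => f x i - f x₀ i) =
      (fun i => f (fun j => x₀ j + h j) i - f x₀ i - D.mulVec h i) + D.mulVec h := by
    funext i; simp only [hx₀h, Pi.add_apply, sub_add_cancel]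
  calc l1norm (fun i => f x i - f x₀ i)
      ≤ ε * l1norm h + maxColSumNorm D * l1norm h := by
        rw [hsplit]
        exact (l1norm_add_le _ _).trans (add_le_add (hrem h hpos hx) (l1norm_mulVec_le D h))
    _ = (ε + maxColSumNorm D) * l1norm h := (add_mul _ _ _).symm

lemma ENNReal.tendsto_nhds_zero_of_forall_le_ofReal {α : Type*} {l : Filter α} {u : α → ENNReal}
    (h : ∀ ε > (0 : ℝ), ∀ᶠ a in l, u a ≤ ENNReal.ofReal ε) : Tendsto u l (nhds 0) := by
  refine ENNReal.tendsto_nhds_zero.mpr fun ε hε => ?_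
  rcases eq_or_ne ε ⊤ with rfl | hε_top
  · exact Eventually.of_forall fun _ => le_top
  · simpa only [ENNReal.ofReal_toReal hε_top] using h ε.toReal (ENNReal.toReal_pos hε.ne' hε_top)

theorem delta_method_high_dim_b_l1_general
    {Ω : Type*} [MeasurableSpace Ω] (P : Measure Ω)
    (p : ℕ → ℕ) (m : ℕ)
    (β₀ : ∀ n, Fin (p n) → ℝ) (βhat : ∀ n, Ω → Fin (p n) → ℝ)
    (f : ∀ n, (Fin (p n) → ℝ) → (Fin m → ℝ))
    (D : ∀ n, Matrix (Fin m) (Fin (p n)) ℝ)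
    (hdiff : ∀ ε > (0 : ℝ), ∃ δ > (0 : ℝ), ∀ n, ∀ h : Fin (p n) → ℝ,
      0 < l1norm h → l1norm h ≤ δ →
      l1norm (fun i => f n (fun j => β₀ n j + h j) i - f n (β₀ n) i
        - (D n).mulVec h i) ≤ ε * l1norm h)
    (r : ℕ → ℝ) (hrtop : Tendsto r atTop atTop)
    (hOp : ∀ ε > (0 : ℝ), ∃ M > (0 : ℝ), ∀ n,
      P {ω | M < r n * l1norm (fun j => βhat n ω j - β₀ n j)} ≤ ENNReal.ofReal ε)
    (hD : Tendsto (fun n => maxColSumNorm (D n)) atTop (nhds 0)) :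
    ∀ δ > (0 : ℝ),
      Tendsto (fun n =>
        P {ω | δ < r n * l1norm (fun i => f n (βhat n ω) i - f n (β₀ n) i)})
        atTop (nhds 0) := by
  intro δ hδ
  refine ENNReal.tendsto_nhds_zero_of_forall_le_ofReal fun ε hε => ?_
  obtain ⟨M, hM, hMP⟩ := hOp ε hε
  set c := δ / (2 * M)
  have hc : 0 < c := by positivity
  obtain ⟨δ₀, hδ₀, hrem⟩ := hdiff c hc
  filter_upwards [hD.eventually (ge_mem_nhds hc), hrtop.eventually_gt_atTop (M / δ₀)]
    with n hDn hrn
  refine (measure_mono fun ω hω => ?_).trans (hMP n)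
  simp only [Set.mem_ofPred_eq] at hω ⊢
  by_contra! hsmall
  set e := l1norm (fun j => βhat n ω j - β₀ n j)
  have hr : 0 < r n := (div_pos hM hδ₀).trans hrn
  have he : e ≤ δ₀ := by
    rw [div_lt_iff₀ hδ₀] at hrn
    nlinarith
  have hlip : l1norm (fun i => f n (βhat n ω) i - f n (β₀ n) i) ≤ (c + c) * e :=
    (l1norm_sub_le_of_remainder_le (hrem n) he).trans
      (mul_le_mul_of_nonneg_right (add_le_add_right hDn c) (l1norm_nonneg _))
  have : r n * l1norm (fun i => f n (βhat n ω) i - f n (β₀ n) i) ≤ δ :=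
    calc _ ≤ r n * ((c + c) * e) := by gcongr
      _ = 2 * c * (r n * e) := by ring
      _ ≤ 2 * c * M := by gcongr
      _ = δ := by simp only [c]; field_simp
  linarith

/-- Delta theorem part b, ℓ₁ version: if rₙ‖β̂ₙ − β₀ₙ‖₁ = Oₚ(1), fₙ is
uniformly differentiable in ℓ₁ norm along β₀ₙ with derivatives Dₙ, and the
maximum column sum norm ‖Dₙ‖₁ → 0, then rₙ‖fₙ(β̂ₙ) − fₙ(β₀ₙ)‖₁ → 0 in
probability. -/
theorem delta_method_high_dim_b_l1
    {Ω : Type*} [MeasurableSpace Ω] (P : Measure Ω) [IsProbabilityMeasure P]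
    (p : ℕ → ℕ) (hp : ∀ n, 0 < p n) (m : ℕ) (hm : 0 < m)
    (β₀ : ∀ n, Fin (p n) → ℝ) (βhat : ∀ n, Ω → Fin (p n) → ℝ)
    (f : ∀ n, (Fin (p n) → ℝ) → (Fin m → ℝ))
    (D : ∀ n, Matrix (Fin m) (Fin (p n)) ℝ)
    (hdiff : ∀ ε > (0 : ℝ), ∃ δ > (0 : ℝ), ∀ n, ∀ h : Fin (p n) → ℝ,
      0 < l1norm h → l1norm h ≤ δ →
      l1norm (fun i => f n (fun j => β₀ n j + h j) i - f n (β₀ n) i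
        - (D n).mulVec h i) ≤ ε * l1norm h)
    (r : ℕ → ℝ) (hr : ∀ n, 0 < r n) (hrtop : Tendsto r atTop atTop)
    (hOp : ∀ ε > (0 : ℝ), ∃ M > (0 : ℝ), ∀ n,
      P {ω | M < r n * l1norm (fun j => βhat n ω j - β₀ n j)} ≤ ENNReal.ofReal ε)
    (hD : Tendsto (fun n => maxColSumNorm (D n)) atTop (nhds 0)) :
    ∀ δ > (0 : ℝ),
      Tendsto (fun n =>
        P {ω | δ < r n * l1norm (fun i => f n (βhat n ω) i - f n (β₀ n) i)})
        atTop (nhds 0) :=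
  delta_method_high_dim_b_l1_general P p m β₀ βhat f D hdiff r hrtop hOp hD
end

section
/- (Delta theorem part b, ℓ_∞ version.) Let (Ω, F, P) be a probability space, pₙ a sequence of positive integers, m a fixed positive integer, β₀ₙ ∈ ℝ^{pₙ}, and β̂ₙ : Ω → ℝ^{pₙ} random vectors. Let fₙ : ℝ^{pₙ} → ℝᵐ be uniformly differentiable in ℓ_∞ norm along (β₀ₙ) with derivative matrices Dₙ. Let rₙ → ∞ be positive reals with rₙ‖β̂ₙ − β₀ₙ‖_∞ = Oₚ(1). If the maximum row sum norm ‖Dₙ‖_∞ → 0 as n → ∞, then rₙ‖fₙ(β̂ₙ) − fₙ(β₀ₙ)‖_∞ → 0 in probability. -/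
/-!
Write `h = β̂ₙ − β₀ₙ`. Uniform differentiability and `‖Dₙ h‖_∞ ≤ ‖Dₙ‖_∞ ‖h‖_∞` give
`‖fₙ(β₀ₙ + h) − fₙ(β₀ₙ)‖_∞ ≤ (‖Dₙ‖_∞ + ε) ‖h‖_∞` as soon as `‖h‖_∞ ≤ η(ε)`. On the event
`rₙ ‖h‖_∞ ≤ M` we have `‖h‖_∞ ≤ M / rₙ → 0`, so for large `n` the scaled increment
`rₙ ‖fₙ(β̂ₙ) − fₙ(β₀ₙ)‖_∞` is at most `(‖Dₙ‖_∞ + ε) M`, which is small. Hence the event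
`δ < rₙ ‖fₙ(β̂ₙ) − fₙ(β₀ₙ)‖_∞` is eventually contained in `M < rₙ ‖h‖_∞`, whose probability
is uniformly small by tightness.
-/

open MeasureTheory Filter Finset

/-- ℓ_∞ (sup) norm of a vector in ℝᵏ. -/
noncomputable def linfNorm {k : ℕ} (v : Fin k → ℝ) : ℝ := ⨆ i, |v i|

/-- Maximum row sum matrix norm of an m × p real matrix. -/
noncomputable def maxRowSumNorm {m p : ℕ} (A : Matrix (Fin m) (Fin p) ℝ) : ℝ :=
  ⨆ i, ∑ j, |A i j|

open Topology
open scoped Matrix.Norms.Operator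

theorem linfNorm_eq_norm {k : ℕ} (v : Fin k → ℝ) : linfNorm v = ‖v‖ := by
  rw [Pi.norm_def, Finset.sup_univ_eq_ciSup, NNReal.coe_iSup]
  rfl

theorem maxRowSumNorm_eq_norm {m p : ℕ} (A : Matrix (Fin m) (Fin p) ℝ) :
    maxRowSumNorm A = ‖A‖ := by
  rw [Matrix.linfty_opNorm_def, Finset.sup_univ_eq_ciSup, NNReal.coe_iSup]
  simp [maxRowSumNorm]

theorem norm_mulVec_le_maxRowSumNorm_mul {m p : ℕ} (A : Matrix (Fin m) (Fin p) ℝ)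
    (v : Fin p → ℝ) : ‖A.mulVec v‖ ≤ maxRowSumNorm A * ‖v‖ :=
  maxRowSumNorm_eq_norm A ▸ Matrix.linfty_opNorm_mulVec A v

/-- `Zₙ = Oₚ(1)`. -/
def BoundedInProbability {Ω : Type*} [MeasurableSpace Ω] (P : Measure Ω)
    (Z : ℕ → Ω → ℝ) : Prop :=
  ∀ ε > (0 : ℝ), ∃ M > (0 : ℝ), ∀ n, P {ω | M < Z n ω} ≤ ENNReal.ofReal ε

theorem BoundedInProbability.tendsto_measure_of_eventually_le {Ω : Type*}
    [MeasurableSpace Ω] {P : Measure Ω} {Z W : ℕ → Ω → ℝ} {δ : ℝ}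
    (hZ : BoundedInProbability P Z)
    (hW : ∀ M > (0 : ℝ), ∀ᶠ n in atTop, ∀ ω, Z n ω ≤ M → W n ω ≤ δ) :
    Tendsto (fun n => P {ω | δ < W n ω}) atTop (𝓝 0) := by
  refine ENNReal.tendsto_nhds_zero.2 fun ε hε => ?_
  obtain ⟨e, -, he, heε⟩ := ENNReal.lt_iff_exists_real_btwn.1 hε
  obtain ⟨M, hM, hPM⟩ := hZ e (ENNReal.ofReal_pos.1 he)
  filter_upwards [hW M hM] with n hn
  calc P {ω | δ < W n ω}
      ≤ P {ω | M < Z n ω} := measure_mono fun ω hω => lt_of_not_ge fun hZ => (hn ω hZ).not_gt hω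
    _ ≤ ε := (hPM n).trans heε.le

section Increment

variable {F : Type*} [SeminormedAddCommGroup F]

theorem norm_sub_le_of_norm_remainder_le {E : Type*} [NormedAddCommGroup E] {g L : E → F}
    {x h : E} {c ε : ℝ} (hL : ‖L h‖ ≤ c * ‖h‖)
    (hrem : 0 < ‖h‖ → ‖g (x + h) - g x - L h‖ ≤ ε * ‖h‖) :
    ‖g (x + h) - g x‖ ≤ (c + ε) * ‖h‖ := by
  rcases (norm_nonneg h).eq_or_lt with h0 | hpos
  · simp [norm_eq_zero.1 h0.symm]
  · calc ‖g (x + h) - g x‖ = ‖(g (x + h) - g x - L h) + L h‖ := by rw [sub_add_cancel]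
      _ ≤ ε * ‖h‖ + c * ‖h‖ := norm_add_le_of_le (hrem hpos) hL
      _ = (c + ε) * ‖h‖ := by ring

theorem eventually_mul_norm_sub_le {E : ℕ → Type*} [∀ n, NormedAddCommGroup (E n)]
    {g L : ∀ n, E n → F} {x : ∀ n, E n} {c r : ℕ → ℝ}
    (hdiff : ∀ ε > (0 : ℝ), ∃ δ > (0 : ℝ), ∀ n (h : E n), 0 < ‖h‖ → ‖h‖ ≤ δ →
      ‖g n (x n + h) - g n (x n) - L n h‖ ≤ ε * ‖h‖)
    (hL : ∀ n h, ‖L n h‖ ≤ c n * ‖h‖) (hc : Tendsto c atTop (𝓝 0))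
    (hr : Tendsto r atTop atTop) {δ M : ℝ} (hδ : 0 < δ) (hM : 0 < M) :
    ∀ᶠ n in atTop, ∀ h : E n, r n * ‖h‖ ≤ M → r n * ‖g n (x n + h) - g n (x n)‖ ≤ δ := by
  set ε := δ / (2 * M) with hε_def
  have hε : 0 < ε := by positivity
  obtain ⟨η, hη, hrem⟩ := hdiff ε hε
  filter_upwards [hr.eventually_ge_atTop (M / η), hc.eventually_le_const hε]
    with n hrn hcn h hh
  have hrpos : 0 < r n := (div_pos hM hη).trans_le hrn
  have hhη : ‖h‖ ≤ η :=
    calc ‖h‖ ≤ M / r n := (le_div_iff₀' hrpos).2 hh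
      _ ≤ η := (div_le_iff₀ hrpos).2 (by rw [div_le_iff₀ hη] at hrn; linarith)
  have hinc := norm_sub_le_of_norm_remainder_le (hL n h) (hrem n h · hhη)
  calc r n * ‖g n (x n + h) - g n (x n)‖ ≤ (c n + ε) * (r n * ‖h‖) := by
        rw [mul_left_comm]; exact mul_le_mul_of_nonneg_left hinc hrpos.le
    _ ≤ 2 * ε * M := by nlinarith [mul_nonneg hrpos.le (norm_nonneg h)]
    _ = δ := by rw [hε_def]; field_simp

end Increment

theorem delta_method_high_dim_b_linf_general
    {Ω : Type*} [MeasurableSpace Ω] (P : Measure Ω)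
    (p : ℕ → ℕ) (m : ℕ)
    (β₀ : ∀ n, Fin (p n) → ℝ) (βhat : ∀ n, Ω → Fin (p n) → ℝ)
    (f : ∀ n, (Fin (p n) → ℝ) → (Fin m → ℝ))
    (D : ∀ n, Matrix (Fin m) (Fin (p n)) ℝ)
    (hdiff : ∀ ε > (0 : ℝ), ∃ δ > (0 : ℝ), ∀ n, ∀ h : Fin (p n) → ℝ,
      0 < linfNorm h → linfNorm h ≤ δ →
      linfNorm (fun i => f n (fun j => β₀ n j + h j) i - f n (β₀ n) i
        - (D n).mulVec h i) ≤ ε * linfNorm h)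
    (r : ℕ → ℝ) (hrtop : Tendsto r atTop atTop)
    (hOp : ∀ ε > (0 : ℝ), ∃ M > (0 : ℝ), ∀ n,
      P {ω | M < r n * linfNorm (fun j => βhat n ω j - β₀ n j)} ≤ ENNReal.ofReal ε)
    (hD : Tendsto (fun n => maxRowSumNorm (D n)) atTop (nhds 0)) :
    ∀ δ > (0 : ℝ),
      Tendsto (fun n =>
        P {ω | δ < r n * linfNorm (fun i => f n (βhat n ω) i - f n (β₀ n) i)})
        atTop (nhds 0) := by
  intro δ hδ
  simp only [linfNorm_eq_norm] at hdiff hOp ⊢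
  refine BoundedInProbability.tendsto_measure_of_eventually_le hOp fun M hM => ?_
  filter_upwards [eventually_mul_norm_sub_le hdiff
    (fun n => norm_mulVec_le_maxRowSumNorm_mul (D n)) hD hrtop hδ hM] with n hn ω hω
  have key := hn (βhat n ω - β₀ n) hω
  rw [add_sub_cancel] at key
  exact key

/-- Delta theorem part b, ℓ_∞ version: if rₙ‖β̂ₙ − β₀ₙ‖_∞ = Oₚ(1), fₙ is
uniformly differentiable in ℓ_∞ norm along β₀ₙ with derivatives Dₙ, and the
maximum row sum norm ‖Dₙ‖_∞ → 0, then rₙ‖fₙ(β̂ₙ) − fₙ(β₀ₙ)‖_∞ → 0 in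
probability. -/
theorem delta_method_high_dim_b_linf
    {Ω : Type*} [MeasurableSpace Ω] (P : Measure Ω) [IsProbabilityMeasure P]
    (p : ℕ → ℕ) (hp : ∀ n, 0 < p n) (m : ℕ) (hm : 0 < m)
    (β₀ : ∀ n, Fin (p n) → ℝ) (βhat : ∀ n, Ω → Fin (p n) → ℝ)
    (f : ∀ n, (Fin (p n) → ℝ) → (Fin m → ℝ))
    (D : ∀ n, Matrix (Fin m) (Fin (p n)) ℝ)
    (hdiff : ∀ ε > (0 : ℝ), ∃ δ > (0 : ℝ), ∀ n, ∀ h : Fin (p n) → ℝ,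
      0 < linfNorm h → linfNorm h ≤ δ →
      linfNorm (fun i => f n (fun j => β₀ n j + h j) i - f n (β₀ n) i
        - (D n).mulVec h i) ≤ ε * linfNorm h)
    (r : ℕ → ℝ) (hr : ∀ n, 0 < r n) (hrtop : Tendsto r atTop atTop)
    (hOp : ∀ ε > (0 : ℝ), ∃ M > (0 : ℝ), ∀ n,
      P {ω | M < r n * linfNorm (fun j => βhat n ω j - β₀ n j)} ≤ ENNReal.ofReal ε)
    (hD : Tendsto (fun n => maxRowSumNorm (D n)) atTop (nhds 0)) :
    ∀ δ > (0 : ℝ),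
      Tendsto (fun n =>
        P {ω | δ < r n * linfNorm (fun i => f n (βhat n ω) i - f n (β₀ n) i)})
        atTop (nhds 0) :=
  delta_method_high_dim_b_linf_general P p m β₀ βhat f D hdiff r hrtop hOp hD
end
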